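/- arXiv:1501.01156 — 2 statements merged into one kernel-verified Lean document; each statement's English description precedes it below -/
import Mathlib

section
/- For real numbers α > 0 and β, ∫_{ℝ} arctan(αx + β)/(1 + x²) dx = π · arctan(β/(α + 1)). -/
/-!
Differentiate in `β`. The derivative of the left side is
`∫ dx / ((1 + x²) (1 + (αx + β)²))`, which partial fractions evaluate to
`π (α + 1) / ((α + 1)² + β²)`, the derivative of the right side; and both sides vanish at
`β = 0`, the left one because its integrand is then odd.
-/

open Real MeasureTheory Filter Topology Bornology

lemma tendsto_cobounded_of_eq_comp_inv {f g : ℝ → ℝ} (hf : ContinuousAt f 0)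
    (hfg : ∀ x ≠ 0, g x = f x⁻¹) : Tendsto g (cobounded ℝ) (𝓝 (f 0)) := by
  refine (hf.tendsto.comp tendsto_inv₀_cobounded).congr' ?_
  filter_upwards [eventually_ne_cobounded 0] with x hx
  exact (hfg x hx).symm

lemma tendsto_div_one_add_sq_cobounded :
    Tendsto (fun x : ℝ => x / (1 + x ^ 2)) (cobounded ℝ) (𝓝 0) := by
  have hf : ContinuousAt (fun t : ℝ => t / (t ^ 2 + 1)) 0 :=
    ContinuousAt.div (by fun_prop) (by fun_prop) (by norm_num)
  simpa using tendsto_cobounded_of_eq_comp_inv hf fun x hx => by field_simp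

lemma tendsto_one_add_sq_div_one_add_sq_affine_cobounded {α : ℝ} (hα : α ≠ 0) (β : ℝ) :
    Tendsto (fun x : ℝ => (1 + x ^ 2) / (1 + (α * x + β) ^ 2)) (cobounded ℝ)
      (𝓝 (α ^ 2)⁻¹) := by
  have hf : ContinuousAt (fun t : ℝ => (t ^ 2 + 1) / (t ^ 2 + (α + β * t) ^ 2)) 0 :=
    ContinuousAt.div (by fun_prop) (by fun_prop) (by simpa)
  simpa using tendsto_cobounded_of_eq_comp_inv hf fun x hx => by field_simp

lemma tendsto_arctan_affine_atTop {α : ℝ} (hα : 0 < α) (β : ℝ) :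
    Tendsto (fun x => arctan (α * x + β)) atTop (𝓝 (π / 2)) :=
  (tendsto_arctan_atTop.mono_right nhdsWithin_le_nhds).comp
    (tendsto_atTop_add_const_right _ β (tendsto_id.const_mul_atTop hα))

lemma tendsto_arctan_affine_atBot {α : ℝ} (hα : 0 < α) (β : ℝ) :
    Tendsto (fun x => arctan (α * x + β)) atBot (𝓝 (-(π / 2))) :=
  (tendsto_arctan_atBot.mono_right nhdsWithin_le_nhds).comp
    (tendsto_atBot_add_const_right _ β (tendsto_id.const_mul_atBot hα))

lemma integrable_div_one_add_sq_of_abs_le {f : ℝ → ℝ} (hf : Measurable f) {C : ℝ}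
    (hC : ∀ x, |f x| ≤ C) : Integrable fun x => f x / (1 + x ^ 2) := by
  refine (integrable_inv_one_add_sq.const_mul C).mono'
    (hf.div (by fun_prop)).aestronglyMeasurable (.of_forall fun x => ?_)
  rw [norm_div, Real.norm_eq_abs, Real.norm_of_nonneg (by positivity), div_eq_mul_inv]
  gcongr
  exact hC x

lemma abs_inv_one_add_sq_le_one (y : ℝ) : |(1 + y ^ 2)⁻¹| ≤ 1 := by
  rw [abs_of_pos (by positivity)]
  exact inv_le_one_of_one_le₀ (by nlinarith [sq_nonneg y])

lemma integrable_inv_one_add_sq_comp_div_one_add_sq {g : ℝ → ℝ} (hg : Measurable g) :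
    Integrable fun x => (1 + g x ^ 2)⁻¹ / (1 + x ^ 2) :=
  integrable_div_one_add_sq_of_abs_le (by fun_prop) fun x => abs_inv_one_add_sq_le_one (g x)

lemma integrable_arctan_comp_div_one_add_sq {g : ℝ → ℝ} (hg : Measurable g) :
    Integrable fun x => arctan (g x) / (1 + x ^ 2) :=
  integrable_div_one_add_sq_of_abs_le (by fun_prop) fun x => (abs_lt.2 (arctan_mem_Ioo _)).le

lemma hasDerivAt_integral_arctan_add_div_one_add_sq {g : ℝ → ℝ} (hg : Measurable g)
    (b : ℝ) :
    HasDerivAt (fun b => ∫ x, arctan (g x + b) / (1 + x ^ 2))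
      (∫ x, (1 + (g x + b) ^ 2)⁻¹ / (1 + x ^ 2)) b := by
  refine (hasDerivAt_integral_of_dominated_loc_of_deriv_le (bound := fun x => (1 + x ^ 2)⁻¹)
    (F' := fun b x => (1 + (g x + b) ^ 2)⁻¹ / (1 + x ^ 2))
    (Metric.ball_mem_nhds b one_pos)
    (.of_forall fun b => (integrable_arctan_comp_div_one_add_sq (g := (g · + b)) (by fun_prop)).1)
    (integrable_arctan_comp_div_one_add_sq (g := (g · + b)) (by fun_prop))
    (integrable_inv_one_add_sq_comp_div_one_add_sq (g := (g · + b)) (by fun_prop)).1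
    (.of_forall fun x b _ => ?_) integrable_inv_one_add_sq
    (.of_forall fun x b _ => ?_)).2
  · rw [norm_div, Real.norm_eq_abs, Real.norm_of_nonneg (by positivity), div_eq_mul_inv]
    exact mul_le_of_le_one_left (by positivity) (abs_inv_one_add_sq_le_one _)
  · simpa using (((hasDerivAt_id b).const_add (g x)).arctan).div_const (1 + x ^ 2)

lemma integral_eq_zero_of_odd {E : Type*} [NormedAddCommGroup E] [NormedSpace ℝ E]
    {f : ℝ → E} (hf : Function.Odd f) : ∫ x, f x = 0 := by
  have h : ∫ x, f x = -∫ x, f x := by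
    calc ∫ x, f x = ∫ x, f (-x) := (integral_neg_eq_self f volume).symm
      _ = -∫ x, f x := by rw [show (fun x => f (-x)) = fun x => -f x from funext hf, integral_neg]
  simpa [eq_neg_iff_add_eq_zero, ← two_smul ℝ] using h

theorem integral_inv_one_add_sq_div_one_add_sq :
    ∫ x : ℝ, (1 + x ^ 2)⁻¹ / (1 + x ^ 2) = π / 2 := by
  have hderiv (x : ℝ) : HasDerivAt (fun x => (x / (1 + x ^ 2) + arctan x) / 2)
      ((1 + x ^ 2)⁻¹ / (1 + x ^ 2)) x := by
    have hq : 1 + x ^ 2 ≠ 0 := by positivity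
    refine ((((hasDerivAt_id' x).div ((hasDerivAt_pow 2 x).const_add 1) hq).add
      (hasDerivAt_arctan x)).div_const 2).congr_deriv ?_
    field_simp
    ring
  have hlim (l : Filter ℝ) (hl : l ≤ cobounded ℝ) {a : ℝ} (ha : Tendsto arctan l (𝓝 a)) :
      Tendsto (fun x => (x / (1 + x ^ 2) + arctan x) / 2) l (𝓝 ((0 + a) / 2)) :=
    ((tendsto_div_one_add_sq_cobounded.mono_left hl).add ha).div_const 2
  rw [integral_of_hasDerivAt_of_tendsto hderiv
    (integrable_inv_one_add_sq_comp_div_one_add_sq measurable_id)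
    (hlim _ IsOrderBornology.atBot_le_cobounded
      (tendsto_arctan_atBot.mono_right nhdsWithin_le_nhds))
    (hlim _ IsOrderBornology.atTop_le_cobounded
      (tendsto_arctan_atTop.mono_right nhdsWithin_le_nhds))]
  ring

lemma hasDerivAt_log_div_add_arctan_add_arctan (α β A B E x : ℝ) :
    HasDerivAt (fun x => A / 2 * log ((1 + x ^ 2) / (1 + (α * x + β) ^ 2)) + B * arctan x
        + E * arctan (α * x + β))
      ((A * x + B) / (1 + x ^ 2) + α * (E - A * (α * x + β)) / (1 + (α * x + β) ^ 2)) x := by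
  have hq : 1 + x ^ 2 ≠ 0 := by positivity
  have hr : 1 + (α * x + β) ^ 2 ≠ 0 := by positivity
  have hy : HasDerivAt (fun x => α * x + β) α x := by
    simpa using ((hasDerivAt_id' x).const_mul α).add_const β
  have hlog := (((hasDerivAt_pow 2 x).const_add 1).div ((hy.pow 2).const_add 1) hr).log
    (div_ne_zero hq hr)
  refine (((hlog.const_mul (A / 2)).add ((hasDerivAt_arctan x).const_mul B)).add
    (hy.arctan.const_mul E)).congr_deriv ?_
  simp only [Pi.div_apply, Pi.pow_apply]
  field_simp
  ring

theorem integral_inv_one_add_sq_affine_div_one_add_sq_of_ne {α β : ℝ} (hα : 0 < α)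
    (hαβ : α ≠ 1 ∨ β ≠ 0) :
    ∫ x, (1 + (α * x + β) ^ 2)⁻¹ / (1 + x ^ 2) =
      π * (α + 1) / ((α + 1) ^ 2 + β ^ 2) := by
  have hD : (1 - α) ^ 2 + β ^ 2 ≠ 0 := by
    rcases hαβ with h | h
    · have := sub_ne_zero.2 (Ne.symm h)
      positivity
    · positivity
  -- partial fractions; `1 + x²` and `1 + (αx + β)²` are coprime iff `(α, β) ≠ (1, 0)`
  obtain ⟨S, hS⟩ : ∃ S, S = ((1 + α) ^ 2 + β ^ 2) * ((1 - α) ^ 2 + β ^ 2) := ⟨_, rfl⟩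
  obtain ⟨A, hA⟩ : ∃ A, A = -(2 * α * β) / S := ⟨_, rfl⟩
  obtain ⟨B, hB⟩ : ∃ B, B = (1 + β ^ 2 - α ^ 2) / S := ⟨_, rfl⟩
  obtain ⟨E, hE⟩ : ∃ E, E = -A * β - B * α := ⟨_, rfl⟩
  set F : ℝ → ℝ := fun x =>
    A / 2 * log ((1 + x ^ 2) / (1 + (α * x + β) ^ 2)) + B * arctan x + E * arctan (α * x + β)
  have hderiv (x : ℝ) : HasDerivAt F ((1 + (α * x + β) ^ 2)⁻¹ / (1 + x ^ 2)) x := by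
    refine (hasDerivAt_log_div_add_arctan_add_arctan α β A B E x).congr_deriv ?_
    rw [hE, hA, hB, hS]
    field_simp
    ring
  have hlim (l : Filter ℝ) (hl : l ≤ cobounded ℝ) {a b : ℝ} (ha : Tendsto arctan l (𝓝 a))
      (hb : Tendsto (fun x => arctan (α * x + β)) l (𝓝 b)) :
      Tendsto F l (𝓝 (A / 2 * log (α ^ 2)⁻¹ + B * a + E * b)) :=
    ((((tendsto_one_add_sq_div_one_add_sq_affine_cobounded hα.ne' β).mono_left hl).log
      (by positivity)).const_mul _ |>.add (ha.const_mul B)).add (hb.const_mul E)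
  rw [integral_of_hasDerivAt_of_tendsto hderiv
    (integrable_inv_one_add_sq_comp_div_one_add_sq (by fun_prop))
    (hlim _ IsOrderBornology.atBot_le_cobounded
      (tendsto_arctan_atBot.mono_right nhdsWithin_le_nhds)
      (tendsto_arctan_affine_atBot hα β))
    (hlim _ IsOrderBornology.atTop_le_cobounded
      (tendsto_arctan_atTop.mono_right nhdsWithin_le_nhds)
      (tendsto_arctan_affine_atTop hα β)), hE, hA, hB, hS]
  field_simp
  ring

theorem integral_inv_one_add_sq_affine_div_one_add_sq {α : ℝ} (hα : 0 < α) (β : ℝ) :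
    ∫ x, (1 + (α * x + β) ^ 2)⁻¹ / (1 + x ^ 2) =
      π * (α + 1) / ((α + 1) ^ 2 + β ^ 2) := by
  by_cases h : α = 1 ∧ β = 0
  · obtain ⟨rfl, rfl⟩ := h
    simp only [one_mul, add_zero, integral_inv_one_add_sq_div_one_add_sq]
    ring
  · exact integral_inv_one_add_sq_affine_div_one_add_sq_of_ne hα (not_and_or.1 h)

open Real in
/-- For `α > 0` and `β ∈ ℝ`, `∫_ℝ arctan(αx+β)/(1+x²) dx = π arctan(β/(α+1))`. -/
theorem integral_arctan_affine_div_one_add_sq (α β : ℝ) (hα : 0 < α) :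
    ∫ x : ℝ, arctan (α * x + β) / (1 + x ^ 2) = π * arctan (β / (α + 1)) := by
  have hα1 : α + 1 ≠ 0 := by positivity
  have hI (b : ℝ) : HasDerivAt (fun b => ∫ x : ℝ, arctan (α * x + b) / (1 + x ^ 2))
      (π * (α + 1) / ((α + 1) ^ 2 + b ^ 2)) b :=
    integral_inv_one_add_sq_affine_div_one_add_sq hα b ▸
      hasDerivAt_integral_arctan_add_div_one_add_sq (by fun_prop) b
  have hG (b : ℝ) : HasDerivAt (fun b => π * arctan (b / (α + 1)))
      (π * (α + 1) / ((α + 1) ^ 2 + b ^ 2)) b := by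
    refine (((hasDerivAt_id' b).div_const (α + 1)).arctan.const_mul π).congr_deriv ?_
    field_simp
  have hI0 : ∫ x : ℝ, arctan (α * x) / (1 + x ^ 2) = 0 :=
    integral_eq_zero_of_odd fun x => by simp only [mul_neg, arctan_neg, neg_sq, neg_div]
  have hconst := is_const_of_deriv_eq_zero (fun b => ((hI b).sub (hG b)).differentiableAt)
    (fun b => by simpa using ((hI b).sub (hG b)).deriv) β 0
  simpa [hI0, sub_eq_zero] using hconst
end

section
/- For real numbers α > 0 and β, ∫_{ℝ} 1/((1+x²)(1+(αx+β)²)) dx = π(α+1)/((α+1)² + β²). -/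
/-!
Clearing the denominators `(α + 1)² + β²` and `(α - 1)² + β²` of the partial fraction
decomposition gives an elementary primitive of `((α + 1)² + β²)((α - 1)² + β²)` times the
integrand, a combination of `log ((1 + x²) / (1 + (α x + β)²))`, `arctan x` and
`arctan (α x + β)`. The logarithm has the same limit `log α⁻²` at both ends and the arctangents
jump by `π`, which gives the integral whenever `(α, β) ≠ (1, 0)`. The remaining case follows
because both sides are continuous in `β`, by dominated convergence against `(1 + x²)⁻¹`.
-/

open Real MeasureTheory Filter Topology

section

variable (α β : ℝ)

lemma norm_one_div_mul_one_add_sq_le (x : ℝ) :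
    ‖1 / ((1 + x ^ 2) * (1 + (α * x + β) ^ 2))‖ ≤ (1 + x ^ 2)⁻¹ := by
  rw [norm_of_nonneg (by positivity), one_div, mul_inv]
  exact mul_le_of_le_one_right (by positivity)
    (inv_le_one_of_one_le₀ (le_add_of_nonneg_right (sq_nonneg _)))

lemma integrable_one_div_mul_one_add_sq :
    Integrable fun x : ℝ => 1 / ((1 + x ^ 2) * (1 + (α * x + β) ^ 2)) :=
  integrable_inv_one_add_sq.mono' (Measurable.aestronglyMeasurable (by fun_prop))
    (.of_forall (norm_one_div_mul_one_add_sq_le α β))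

lemma continuous_integral_one_div_mul_one_add_sq :
    Continuous fun β : ℝ => ∫ x, 1 / ((1 + x ^ 2) * (1 + (α * x + β) ^ 2)) :=
  continuous_of_dominated (fun β => (integrable_one_div_mul_one_add_sq α β).aestronglyMeasurable)
    (fun β => .of_forall (norm_one_div_mul_one_add_sq_le α β)) integrable_inv_one_add_sq
    (.of_forall fun x => continuous_const.div (by fun_prop) fun β => by positivity)

/-- The partial fraction primitive, scaled by `((α + 1)² + β²)((α - 1)² + β²)` so that it
stays valid when `(α, β) = (1, 0)`, where the integrand has a double pole. -/
noncomputable def partialFractionPrimitive (x : ℝ) : ℝ :=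
  -α * β * (log (1 + x ^ 2) - log (1 + (α * x + β) ^ 2))
    + (1 + β ^ 2 - α ^ 2) * arctan x + α * (α ^ 2 + β ^ 2 - 1) * arctan (α * x + β)

lemma hasDerivAt_partialFractionPrimitive (x : ℝ) :
    HasDerivAt (partialFractionPrimitive α β)
      (((α + 1) ^ 2 + β ^ 2) * ((α - 1) ^ 2 + β ^ 2) *
        (1 / ((1 + x ^ 2) * (1 + (α * x + β) ^ 2)))) x := by
  have hlin : HasDerivAt (fun x => α * x + β) α x := by
    simpa using ((hasDerivAt_id x).const_mul α).add_const β
  have hx : HasDerivAt (fun x => 1 + x ^ 2) (2 * x) x := by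
    simpa using (hasDerivAt_pow 2 x).const_add 1
  have hu : HasDerivAt (fun x => 1 + (α * x + β) ^ 2) (2 * (α * x + β) * α) x := by
    simpa using (hlin.pow 2).const_add 1
  have := ((((hx.log (by positivity)).sub (hu.log (by positivity))).const_mul (-α * β)).add
    ((hasDerivAt_arctan x).const_mul (1 + β ^ 2 - α ^ 2))).add
    (hlin.arctan.const_mul (α * (α ^ 2 + β ^ 2 - 1)))
  refine this.congr_deriv ?_
  have : 1 + x ^ 2 ≠ 0 := by positivity
  have : 1 + (α * x + β) ^ 2 ≠ 0 := by positivity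
  field_simp
  ring

variable {α}

lemma tendsto_log_one_add_sq_sub_log_one_add_sq (hα : α ≠ 0) :
    Tendsto (fun x : ℝ => log (1 + x ^ 2) - log (1 + (α * x + β) ^ 2)) (cocompact ℝ)
      (𝓝 (log (α ^ 2)⁻¹)) := by
  have hratio : Tendsto (fun t : ℝ => (t ^ 2 + 1) / (t ^ 2 + (α + β * t) ^ 2)) (𝓝 0)
      (𝓝 (α ^ 2)⁻¹) := by
    have : ContinuousAt (fun t : ℝ => (t ^ 2 + 1) / (t ^ 2 + (α + β * t) ^ 2)) 0 :=
      ContinuousAt.div (by fun_prop) (by fun_prop) (by simpa using hα)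
    simpa using this.tendsto
  have hinv : Tendsto (fun x : ℝ => (1 + x ^ 2) / (1 + (α * x + β) ^ 2)) (cocompact ℝ)
      (𝓝 (α ^ 2)⁻¹) := by
    have hinv₀ : Tendsto (fun x : ℝ => x⁻¹) (cocompact ℝ) (𝓝 0) :=
      Metric.cobounded_eq_cocompact (α := ℝ) ▸ tendsto_inv₀_cobounded
    refine (hratio.comp hinv₀).congr' ?_
    filter_upwards [(isCompact_singleton (x := (0 : ℝ))).compl_mem_cocompact] with x hx
    have hx : x ≠ 0 := hx
    have : 1 + (α * x + β) ^ 2 ≠ 0 := by positivity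
    simp only [Function.comp_apply]
    field_simp
  exact ((continuousAt_log (by positivity)).tendsto.comp hinv).congr fun x =>
    log_div (by positivity) (by positivity)

variable {β}

lemma tendsto_partialFractionPrimitive_atTop (hα : 0 < α) :
    Tendsto (partialFractionPrimitive α β) atTop
      (𝓝 (-α * β * log (α ^ 2)⁻¹ + (1 + β ^ 2 - α ^ 2) * (π / 2)
        + α * (α ^ 2 + β ^ 2 - 1) * (π / 2))) := by
  have hlog := (tendsto_log_one_add_sq_sub_log_one_add_sq β hα.ne').mono_left atTop_le_cocompact
  have harctan := tendsto_arctan_atTop.mono_right nhdsWithin_le_nhds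
  have hlin : Tendsto (fun x => α * x + β) atTop atTop :=
    tendsto_atTop_add_const_right _ β (tendsto_id.const_mul_atTop hα)
  exact ((hlog.const_mul _).add (harctan.const_mul _)).add ((harctan.comp hlin).const_mul _)

lemma tendsto_partialFractionPrimitive_atBot (hα : 0 < α) :
    Tendsto (partialFractionPrimitive α β) atBot
      (𝓝 (-α * β * log (α ^ 2)⁻¹ + (1 + β ^ 2 - α ^ 2) * (-(π / 2))
        + α * (α ^ 2 + β ^ 2 - 1) * (-(π / 2)))) := by
  have hlog := (tendsto_log_one_add_sq_sub_log_one_add_sq β hα.ne').mono_left atBot_le_cocompact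
  have harctan := tendsto_arctan_atBot.mono_right nhdsWithin_le_nhds
  have hlin : Tendsto (fun x => α * x + β) atBot atBot :=
    tendsto_atBot_add_const_right _ β (tendsto_id.const_mul_atBot hα)
  exact ((hlog.const_mul _).add (harctan.const_mul _)).add ((harctan.comp hlin).const_mul _)

lemma mul_integral_one_div_mul_one_add_sq (hα : 0 < α) :
    ((α + 1) ^ 2 + β ^ 2) * ((α - 1) ^ 2 + β ^ 2) *
        ∫ x : ℝ, 1 / ((1 + x ^ 2) * (1 + (α * x + β) ^ 2))
      = π * (α + 1) * ((α - 1) ^ 2 + β ^ 2) := by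
  rw [← integral_const_mul, integral_of_hasDerivAt_of_tendsto
    (hasDerivAt_partialFractionPrimitive α β) ((integrable_one_div_mul_one_add_sq α β).const_mul _)
    (tendsto_partialFractionPrimitive_atBot hα) (tendsto_partialFractionPrimitive_atTop hα)]
  ring

end

open Real in
/-- For `α > 0` and `β ∈ ℝ`, `∫_ℝ 1/((1+x²)(1+(αx+β)²)) dx = π(α+1)/((α+1)²+β²)`. -/
theorem integral_one_div_mul_one_add_sq (α β : ℝ) (hα : 0 < α) :
    ∫ x : ℝ, 1 / ((1 + x ^ 2) * (1 + (α * x + β) ^ 2))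
      = π * (α + 1) / ((α + 1) ^ 2 + β ^ 2) := by
  have heqOn : ∀ β ≠ 0, ∫ x : ℝ, 1 / ((1 + x ^ 2) * (1 + (α * x + β) ^ 2))
      = π * (α + 1) / ((α + 1) ^ 2 + β ^ 2) := by
    intro β hβ
    have hpos : 0 < (α - 1) ^ 2 + β ^ 2 := by positivity
    rw [eq_div_iff (by positivity)]
    refine mul_right_cancel₀ hpos.ne' ?_
    linear_combination mul_integral_one_div_mul_one_add_sq (β := β) hα
  have hcont : Continuous fun β : ℝ => π * (α + 1) / ((α + 1) ^ 2 + β ^ 2) :=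
    continuous_const.div (by fun_prop) fun β => by positivity
  exact congrFun ((continuous_integral_one_div_mul_one_add_sq α).ext_on (dense_compl_singleton 0)
    hcont heqOn) β
end
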